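/- Let B : ℤ×ℤ → 𝔻 be such that s_n^B(l₀) = 0 for all n ∈ ℤ and some l₀ ∈ {1,2,…}. Then |B(n,k)| = 1 for all n, k ∈ ℤ with n ≠ k, and consequently s_n^B(l) = 0 for all n ∈ ℤ and all l ≥ 0. -/

import Mathlib

open Real

/-!
If `s_n^B(l₀) = 0` then `∑_{k ≠ n} |B(n,k)|^{l₀} / (k-n)^2 = π²/3 = ∑_{k ≠ n} 1 / (k-n)^2`.
Since `|B(n,k)| ≤ 1`, the first series is termwise dominated by the second, and a dominated
series with the same sum agrees with it term by term; hence `|B(n,k)|^{l₀} = 1` for `k ≠ n`.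
Once all off-diagonal entries have modulus one, the series in `s_n^B(l)` is `π²/3` for every `l`.
-/

/-- The noise number `s_n^B(l)` of a matrix `B : ℤ×ℤ → 𝔻`. -/
noncomputable def sZ (B : ℤ → ℤ → ℂ) (n : ℤ) (l : ℕ) : ℝ :=
  (π / Real.sqrt 3) ^ l *
    (1 - 3 / π ^ 2 *
      ∑' k : ℤ, (if k = n then (0:ℝ) else ‖B n k‖ ^ l / ((k : ℝ) - n) ^ 2))

theorem apply_eq_of_le_of_hasSum {ι α : Type*} [AddCommGroup α] [PartialOrder α]
    [IsOrderedAddMonoid α] [TopologicalSpace α] [IsTopologicalAddGroup α]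
    [OrderClosedTopology α] {f g : ι → α} {a : α} (hle : f ≤ g) (hf : HasSum f a)
    (hg : HasSum g a) (i : ι) : f i = g i :=
  (hle i).eq_of_not_lt fun hi => (hasSum_lt hle hi hf hg).false

theorem hasSum_int_one_div_sq : HasSum (fun j : ℤ => 1 / (j : ℝ) ^ 2) (π ^ 2 / 3) := by
  have hpos : HasSum (fun m : ℕ => 1 / ((m : ℤ) : ℝ) ^ 2) (π ^ 2 / 6) := by
    simpa only [Int.cast_natCast] using hasSum_zeta_two
  have hneg : HasSum (fun m : ℕ => 1 / ((-m : ℤ) : ℝ) ^ 2) (π ^ 2 / 6) := by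
    simpa only [Int.cast_neg, Int.cast_natCast, neg_sq] using hasSum_zeta_two
  rw [show π ^ 2 / 3 = π ^ 2 / 6 + π ^ 2 / 6 - 1 / ((0 : ℤ) : ℝ) ^ 2 by simp; ring]
  exact HasSum.of_nat_of_neg (f := fun j : ℤ => 1 / (j : ℝ) ^ 2) hpos hneg

theorem hasSum_one_div_sub_sq (n : ℤ) :
    HasSum (fun k : ℤ => 1 / ((k : ℝ) - n) ^ 2) (π ^ 2 / 3) := by
  have := (Equiv.subRight n).hasSum_iff.mpr hasSum_int_one_div_sq
  simpa [Function.comp_def] using this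

theorem summable_norm_pow_div_sub_sq (B : ℤ → ℤ → ℂ) {n : ℤ} (hB : ∀ k, ‖B n k‖ ≤ 1)
    (l : ℕ) : Summable (fun k : ℤ => ‖B n k‖ ^ l / ((k : ℝ) - n) ^ 2) := by
  refine (hasSum_one_div_sub_sq n).summable.of_nonneg_of_le (fun k => by positivity) fun k => ?_
  gcongr
  exact pow_le_one₀ (norm_nonneg _) (hB k)

-- The diagonal term may be dropped from the `if`: Lean's `x / 0 = 0` makes it vanish anyway.
theorem sZ_eq (B : ℤ → ℤ → ℂ) (n : ℤ) (l : ℕ) :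
    sZ B n l = (π / √3) ^ l * (1 - 3 / π ^ 2 * ∑' k : ℤ, ‖B n k‖ ^ l / ((k : ℝ) - n) ^ 2) := by
  unfold sZ
  congr 4 with k
  split_ifs with hk <;> simp [hk]

theorem sZ_eq_zero_iff (B : ℤ → ℤ → ℂ) (n : ℤ) (l : ℕ) :
    sZ B n l = 0 ↔ ∑' k : ℤ, ‖B n k‖ ^ l / ((k : ℝ) - n) ^ 2 = π ^ 2 / 3 := by
  have hπ : π ≠ 0 := pi_ne_zero
  have hbase : (π / √3) ^ l ≠ 0 := by positivity
  rw [sZ_eq, mul_eq_zero, or_iff_right hbase, sub_eq_zero]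
  constructor <;> intro h
  · field_simp at h
    linarith
  · rw [h]
    field_simp

theorem norm_eq_one_of_sZ_eq_zero (B : ℤ → ℤ → ℂ) {n : ℤ} (hB : ∀ k, ‖B n k‖ ≤ 1) {l : ℕ}
    (hl : l ≠ 0) (h : sZ B n l = 0) {k : ℤ} (hk : k ≠ n) : ‖B n k‖ = 1 := by
  have hsum : HasSum (fun k : ℤ => ‖B n k‖ ^ l / ((k : ℝ) - n) ^ 2) (π ^ 2 / 3) :=
    (sZ_eq_zero_iff B n l).1 h ▸ (summable_norm_pow_div_sub_sq B hB l).hasSum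
  have hle : (fun k : ℤ => ‖B n k‖ ^ l / ((k : ℝ) - n) ^ 2) ≤
      fun k : ℤ => 1 / ((k : ℝ) - n) ^ 2 := fun k => by
    dsimp only
    gcongr
    exact pow_le_one₀ (norm_nonneg _) (hB k)
  have hden : ((k : ℝ) - n) ^ 2 ≠ 0 := by
    have : (k : ℝ) ≠ n := by exact_mod_cast hk
    exact pow_ne_zero 2 (sub_ne_zero.mpr this)
  have hpow : ‖B n k‖ ^ l = 1 :=
    (div_left_inj' hden).1 (apply_eq_of_le_of_hasSum hle hsum (hasSum_one_div_sub_sq n) k)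
  exact (pow_eq_one_iff_of_nonneg (norm_nonneg _) hl).1 hpow

theorem sZ_eq_zero_of_norm_eq_one (B : ℤ → ℤ → ℂ) (n : ℤ) (l : ℕ)
    (h : ∀ k, k ≠ n → ‖B n k‖ = 1) : sZ B n l = 0 := by
  refine (sZ_eq_zero_iff B n l).2 ?_
  have hterm : (fun k : ℤ => ‖B n k‖ ^ l / ((k : ℝ) - n) ^ 2) =
      fun k : ℤ => 1 / ((k : ℝ) - n) ^ 2 := by
    ext k
    by_cases hk : k = n
    · simp [hk]
    · rw [h k hk, one_pow]
  rw [hterm, (hasSum_one_div_sub_sq n).tsum_eq]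

/-- If `B : ℤ×ℤ → 𝔻` satisfies `s_n^B(l₀) = 0` for all `n` and some `l₀ ≥ 1`, then
`|B(n,k)| = 1` for all `n ≠ k`, and `s_n^B(l) = 0` for all `n` and all `l ≥ 0`. -/
theorem stmt10 (B : ℤ → ℤ → ℂ) (hB : ∀ n k, ‖B n k‖ ≤ 1)
    (l₀ : ℕ) (hl₀ : 1 ≤ l₀) (h : ∀ n : ℤ, sZ B n l₀ = 0) :
    (∀ n k : ℤ, n ≠ k → ‖B n k‖ = 1) ∧
    (∀ (n : ℤ) (l : ℕ), sZ B n l = 0) := by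
  have hunit : ∀ n k : ℤ, n ≠ k → ‖B n k‖ = 1 := fun n k hnk =>
    norm_eq_one_of_sZ_eq_zero B (hB n) (by omega) (h n) hnk.symm
  exact ⟨hunit, fun n l => sZ_eq_zero_of_norm_eq_one B n l fun k hk => hunit n k hk.symm⟩
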